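/- arXiv:1410.8629 — 3 statements merged into one kernel-verified Lean document; each statement's English description precedes it below -/
import Mathlib

section
/- Let λ₂, λ₃ be real numbers with 0 < λ₂ < 1 < λ₃ and λ₂λ₃² > λ₃. Consider the diagonal matrix D = diag(λ₂, λ₃²) acting on ℝ². Then there exists an angle a > 0 such that R_a·D has two real eigenvalues μ₁, μ₂ with 1 < μ₁ < λ₃ < μ₂. -/
/-!
Since `det R_a = 1`, the characteristic polynomial of `R_a · diag(λ₂, λ₃²)` is
`X² - cos a (λ₂ + λ₃²) X + λ₂λ₃²`: turning the angle only rescales the trace. So any pair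
`μ₁, μ₂` with product `λ₂λ₃²` and sum in `(0, λ₂ + λ₃²)` is the spectrum for
`a = arccos ((μ₁ + μ₂) / (λ₂ + λ₃²))`. Take `μ₁ = (1 + λ₂λ₃) / 2 ∈ (1, λ₂λ₃)` and
`μ₂ = λ₂λ₃² / μ₁ > λ₃`; the sum bound is `f μ₁ < f λ₂` for `f t = t + λ₂λ₃² / t`, which holds
since `λ₂ < μ₁` and `λ₂μ₁ < λ₂λ₃²`.
-/

open Real Matrix Polynomial

lemma X_sub_C_mul_X_sub_C {R : Type*} [CommRing R] (x y : R) :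
    (X - C x) * (X - C y) = X ^ 2 - C (x + y) * X + C (x * y) := by
  rw [C_add, C_mul]; ring

lemma charpoly_rotation_mul_diagonal (a p q : ℝ) :
    ((!![cos a, -sin a; sin a, cos a] : Matrix (Fin 2) (Fin 2) ℝ) * !![p, 0; 0, q]).charpoly
      = X ^ 2 - C (cos a * (p + q)) * X + C (p * q) := by
  have htrace : ((!![cos a, -sin a; sin a, cos a] : Matrix (Fin 2) (Fin 2) ℝ)
      * !![p, 0; 0, q]).trace = cos a * (p + q) := by
    simp only [mul_fin_two, trace_fin_two_of]; ring
  have hdet : ((!![cos a, -sin a; sin a, cos a] : Matrix (Fin 2) (Fin 2) ℝ)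
      * !![p, 0; 0, q]).det = p * q := by
    rw [det_mul, det_fin_two_of, det_fin_two_of]
    linear_combination p * q * sin_sq_add_cos_sq a
  rw [charpoly_fin_two, htrace, hdet]

lemma exists_pos_angle_charpoly_rotation_mul_diagonal {p q μ₁ μ₂ : ℝ}
    (hsum_pos : 0 < μ₁ + μ₂) (hsum_lt : μ₁ + μ₂ < p + q) (hprod : μ₁ * μ₂ = p * q) :
    ∃ a : ℝ, 0 < a ∧
      ((!![cos a, -sin a; sin a, cos a] : Matrix (Fin 2) (Fin 2) ℝ)
          * !![p, 0; 0, q]).charpoly = (X - C μ₁) * (X - C μ₂) := by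
  set c := (μ₁ + μ₂) / (p + q)
  have hc_pos : 0 < c := div_pos hsum_pos (hsum_pos.trans hsum_lt)
  have hc_lt : c < 1 := (div_lt_one (hsum_pos.trans hsum_lt)).2 hsum_lt
  refine ⟨arccos c, arccos_pos.2 hc_lt, ?_⟩
  have htrace : cos (arccos c) * (p + q) = μ₁ + μ₂ := by
    rw [cos_arccos (by linarith) hc_lt.le]
    exact div_mul_cancel₀ _ (hsum_pos.trans hsum_lt).ne'
  rw [charpoly_rotation_mul_diagonal, htrace, ← hprod, X_sub_C_mul_X_sub_C]

lemma add_div_lt_add_div_of_lt {b t P : ℝ} (hb : 0 < b) (hbt : b < t) (hP : t * b < P) :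
    t + P / t < b + P / b := by
  have ht : 0 < t := hb.trans hbt
  have key : b + P / b - (t + P / t) = (t - b) * (P - t * b) / (t * b) := by
    field_simp; ring
  have : 0 < (t - b) * (P - t * b) / (t * b) := by
    apply div_pos (mul_pos _ _) (mul_pos ht hb) <;> linarith
  linarith

theorem stmt10 (l2 l3 : ℝ) (h2 : 0 < l2) (h21 : l2 < 1) (h3 : 1 < l3)
    (hprod : l3 < l2 * l3 ^ 2) :
    ∃ a : ℝ, 0 < a ∧ ∃ μ₁ μ₂ : ℝ,
      ((!![cos a, -sin a; sin a, cos a] : Matrix (Fin 2) (Fin 2) ℝ)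
          * !![l2, 0; 0, l3 ^ 2]).charpoly = (X - C μ₁) * (X - C μ₂) ∧
      1 < μ₁ ∧ μ₁ < l3 ∧ l3 < μ₂ := by
  have h23 : 1 < l2 * l3 := by nlinarith
  set μ₁ := (1 + l2 * l3) / 2 with hμ₁
  set μ₂ := l2 * l3 ^ 2 / μ₁
  have hμ₁_gt : 1 < μ₁ := by rw [hμ₁]; linarith
  have hμ₁_lt : μ₁ < l2 * l3 := by rw [hμ₁]; linarith
  have hμ₁_pos : 0 < μ₁ := by linarith
  have hμ₁_lt_l3 : μ₁ < l3 := by nlinarith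
  have hμ₂_gt : l3 < μ₂ := by rw [lt_div_iff₀ hμ₁_pos]; nlinarith
  have hsum : μ₁ + μ₂ < l2 + l3 ^ 2 := by
    have := add_div_lt_add_div_of_lt h2 (h21.trans hμ₁_gt) (by nlinarith : μ₁ * l2 < l2 * l3 ^ 2)
    rwa [mul_div_cancel_left₀ _ h2.ne'] at this
  have hμ_prod : μ₁ * μ₂ = l2 * l3 ^ 2 := mul_div_cancel₀ _ hμ₁_pos.ne'
  obtain ⟨a, ha, hchar⟩ :=
    exists_pos_angle_charpoly_rotation_mul_diagonal (by linarith) hsum hμ_prod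
  exact ⟨a, ha, μ₁, μ₂, hchar, hμ₁_gt, hμ₁_lt_l3, hμ₂_gt⟩
end

section
/- Let h : ℝ^d → ℝ^d be defined by h(x) = R_{ψ(‖x‖)}(x), where R_θ is rotation by angle θ in a fixed 2-plane P ⊆ ℝ^d and ψ : [0,∞) → [0,a] is smooth, constant equal to a near 0, zero for t > ε, and satisfies |t ψ'(t)| < ε. Then h is smooth, h(x) = x whenever ‖x‖ > ε, and the derivative of h at 0 equals R_a. -/
open Set Real

noncomputable def Rot (d : ℕ) (θ : ℝ) (x : EuclideanSpace ℝ (Fin (d + 2))) :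
    EuclideanSpace ℝ (Fin (d + 2)) :=
  (WithLp.equiv 2 (Fin (d + 2) → ℝ)).symm fun i =>
    if i = 0 then Real.cos θ * x 0 - Real.sin θ * x 1
    else if i = 1 then Real.sin θ * x 0 + Real.cos θ * x 1
    else x i

lemma Rot_apply (d : ℕ) (θ : ℝ) (x : EuclideanSpace ℝ (Fin (d + 2))) (i : Fin (d+2)) :
    Rot d θ x i = if i = 0 then Real.cos θ * x 0 - Real.sin θ * x 1
    else if i = 1 then Real.sin θ * x 0 + Real.cos θ * x 1
    else x i := rfl

lemma Rot_zero (d : ℕ) (x : EuclideanSpace ℝ (Fin (d + 2))) : Rot d 0 x = x := by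
  ext i
  simp only [Rot_apply, Real.cos_zero, Real.sin_zero, one_mul, zero_mul, sub_zero, add_zero]
  split_ifs with h1 h2
  · rw [h1]
  · rw [h2, zero_add]
  · rfl

noncomputable def RotL (d : ℕ) (θ : ℝ) :
    EuclideanSpace ℝ (Fin (d + 2)) →L[ℝ] EuclideanSpace ℝ (Fin (d + 2)) :=
  LinearMap.toContinuousLinearMap
  { toFun := Rot d θ
    map_add' := by
      intro x y
      ext i
      simp [Rot_apply]
      split_ifs <;> ring
    map_smul' := by
      intro c x
      ext i
      simp [Rot_apply]
      split_ifs <;> ring }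

lemma RotL_apply (d : ℕ) (θ : ℝ) (x : EuclideanSpace ℝ (Fin (d + 2))) :
    RotL d θ x = Rot d θ x := rfl

theorem stmt13 (d : ℕ) (a ε : ℝ) (ha : 0 < a) (hε : 0 < ε) (ψ : ℝ → ℝ)
    (hψ : ContDiff ℝ (⊤ : ℕ∞) ψ)
    (hrange : ∀ t ∈ Ici (0:ℝ), ψ t ∈ Icc 0 a)
    (hnear : ∃ δ > 0, ∀ t ∈ Ico (0:ℝ) δ, ψ t = a)
    (hfar : ∀ t, ε < t → ψ t = 0)
    (hder : ∀ t, 0 ≤ t → |t * deriv ψ t| < ε)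
    (h : EuclideanSpace ℝ (Fin (d + 2)) → EuclideanSpace ℝ (Fin (d + 2)))
    (hh : ∀ x, h x = Rot d (ψ ‖x‖) x) :
    ContDiff ℝ (⊤ : ℕ∞) h ∧
    (∀ x, ε < ‖x‖ → h x = x) ∧
    (∀ v, fderiv ℝ h 0 v = Rot d a v) := by
  obtain ⟨δ, hδ, hδa⟩ := hnear
  -- g := fun x => ψ ‖x‖ is smooth
  have hg : ContDiff ℝ (⊤ : ℕ∞) (fun x : EuclideanSpace ℝ (Fin (d + 2)) => ψ ‖x‖) := by
    rw [contDiff_iff_contDiffAt]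
    intro x
    rcases eq_or_ne x 0 with rfl | hx
    · have : (fun x : EuclideanSpace ℝ (Fin (d + 2)) => ψ ‖x‖) =ᶠ[nhds 0] fun _ => a := by
        filter_upwards [Metric.ball_mem_nhds (0 : EuclideanSpace ℝ (Fin (d + 2))) hδ] with y hy
        exact hδa _ ⟨norm_nonneg y, by simpa using hy⟩
      exact (contDiffAt_const (c := a)).congr_of_eventuallyEq this
    · exact hψ.contDiffAt.comp x (contDiffAt_norm ℝ hx)
  have hhfun : h = fun x => Rot d (ψ ‖x‖) x := funext hh
  have hsm : ContDiff ℝ (⊤ : ℕ∞) h := by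
    rw [hhfun]
    rw [contDiff_euclidean]
    intro i
    have h0 : ContDiff ℝ (⊤ : ℕ∞) (fun x : EuclideanSpace ℝ (Fin (d + 2)) => x 0) :=
      (EuclideanSpace.proj (0 : Fin (d+2)) : _ →L[ℝ] ℝ).contDiff
    have h1 : ContDiff ℝ (⊤ : ℕ∞) (fun x : EuclideanSpace ℝ (Fin (d + 2)) => x 1) :=
      (EuclideanSpace.proj (1 : Fin (d+2)) : _ →L[ℝ] ℝ).contDiff
    have hi : ContDiff ℝ (⊤ : ℕ∞) (fun x : EuclideanSpace ℝ (Fin (d + 2)) => x i) :=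
      (EuclideanSpace.proj i : _ →L[ℝ] ℝ).contDiff
    simp only [Rot_apply]
    split_ifs
    · exact ((Real.contDiff_cos.comp hg).mul h0).sub ((Real.contDiff_sin.comp hg).mul h1)
    · exact ((Real.contDiff_sin.comp hg).mul h0).add ((Real.contDiff_cos.comp hg).mul h1)
    · exact hi
  refine ⟨hsm, ?_, ?_⟩
  · intro x hx
    rw [hh x, hfar _ hx, Rot_zero]
  · intro v
    have heq : h =ᶠ[nhds (0 : EuclideanSpace ℝ (Fin (d + 2)))] RotL d a := by
      filter_upwards [Metric.ball_mem_nhds (0 : EuclideanSpace ℝ (Fin (d + 2))) hδ] with y hy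
      rw [hh y, RotL_apply, hδa ‖y‖ ⟨norm_nonneg y, by simpa using hy⟩]
    rw [heq.fderiv_eq, (RotL d a).fderiv]
    rfl
end

section
/- With h as above (h(x) = R_{ψ(‖x‖)}(x) with P the span of the first two coordinates), for every x ∈ ℝ^d there is θ ∈ [0,a] such that ‖Dh_x − R_θ‖ < ε, where the norm of a linear map is the supremum of the absolute values of its matrix entries. -/
open Set Real

noncomputable def RotCLM (d : ℕ) (θ : ℝ) :
    EuclideanSpace ℝ (Fin (d + 2)) →L[ℝ] EuclideanSpace ℝ (Fin (d + 2)) :=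
  ((PiLp.continuousLinearEquiv 2 ℝ fun _ : Fin (d + 2) => ℝ).symm :
      (Fin (d + 2) → ℝ) →L[ℝ] EuclideanSpace ℝ (Fin (d + 2))).comp
    (ContinuousLinearMap.pi fun i =>
      if i = 0 then Real.cos θ • EuclideanSpace.proj 0 - Real.sin θ • EuclideanSpace.proj 1
      else if i = 1 then Real.sin θ • EuclideanSpace.proj 0 + Real.cos θ • EuclideanSpace.proj 1
      else EuclideanSpace.proj i)

lemma RotCLM_apply (d : ℕ) (θ : ℝ) (x : EuclideanSpace ℝ (Fin (d + 2))) :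
    RotCLM d θ x = Rot d θ x := by
  unfold RotCLM Rot
  ext i
  by_cases h0 : i = 0
  · simp [h0]
  by_cases h1 : i = 1
  · simp [h0, h1]
  · simp [h0, h1]

set_option maxHeartbeats 1000000 in
theorem stmt14 (d : ℕ) (a ε : ℝ) (ha : 0 < a) (hε : 0 < ε) (ψ : ℝ → ℝ)
    (hψ : ContDiff ℝ (⊤ : ℕ∞) ψ)
    (hrange : ∀ t ∈ Ici (0:ℝ), ψ t ∈ Icc 0 a)
    (hnear : ∃ δ > 0, ∀ t ∈ Ico (0:ℝ) δ, ψ t = a)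
    (hfar : ∀ t, ε < t → ψ t = 0)
    (hder : ∀ t, 0 ≤ t → |t * deriv ψ t| < ε)
    (h : EuclideanSpace ℝ (Fin (d + 2)) → EuclideanSpace ℝ (Fin (d + 2)))
    (hh : ∀ x, h x = Rot d (ψ ‖x‖) x) :
    ∀ x, ∃ θ ∈ Icc 0 a, ∀ i j : Fin (d + 2),
      |fderiv ℝ h x (EuclideanSpace.single j 1) i
        - Rot d θ (EuclideanSpace.single j 1) i| < ε := by
  obtain ⟨δ, hδ0, hδa⟩ := hnear
  intro x
  refine ⟨ψ ‖x‖, hrange _ (norm_nonneg x), ?_⟩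
  by_cases hxδ : ‖x‖ < δ
  · have hψx : ψ ‖x‖ = a := hδa _ ⟨norm_nonneg x, hxδ⟩
    have hloc : h =ᶠ[nhds x] fun y => RotCLM d a y := by
      have hball : Metric.ball (0 : EuclideanSpace ℝ (Fin (d + 2))) δ ∈ nhds x :=
        Metric.isOpen_ball.mem_nhds (by simpa [mem_ball_zero_iff] using hxδ)
      filter_upwards [hball] with y hy
      rw [hh, hδa _ ⟨norm_nonneg y, by simpa [mem_ball_zero_iff] using hy⟩, RotCLM_apply]
    have hD : HasFDerivAt h (RotCLM d a) x :=
      (RotCLM d a).hasFDerivAt.congr_of_eventuallyEq hloc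
    intro i j
    rw [hD.fderiv, hψx, RotCLM_apply]
    simpa using hε
  · have hr : 0 < ‖x‖ := lt_of_lt_of_le hδ0 (not_lt.mp hxδ)
    set r := ‖x‖ with hrdef
    set θ := ψ r with hθdef
    set p := deriv ψ r with hpdef
    have hsq : HasFDerivAt (fun y : EuclideanSpace ℝ (Fin (d+2)) => ‖y‖ ^ 2)
        (2 • innerSL ℝ x) x := (hasStrictFDerivAt_norm_sq x).hasFDerivAt
    have hsqrt : HasDerivAt Real.sqrt (1 / (2 * Real.sqrt (‖x‖ ^ 2))) (‖x‖ ^ 2) :=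
      Real.hasDerivAt_sqrt (by positivity)
    have hnorm : HasFDerivAt (fun y : EuclideanSpace ℝ (Fin (d+2)) => ‖y‖)
        ((1 / (2 * r)) • (2 • innerSL ℝ x)) x := by
      have H := hsqrt.comp_hasFDerivAt x hsq
      simp only [Function.comp_def, Real.sqrt_sq (norm_nonneg _)] at H
      exact H
    have hψr : HasDerivAt ψ p r := ((hψ.differentiable (by simp)) r).hasDerivAt
    have hg : HasFDerivAt (fun y : EuclideanSpace ℝ (Fin (d+2)) => ψ ‖y‖)
        (p • ((1 / (2 * r)) • (2 • innerSL ℝ x))) x := hψr.comp_hasFDerivAt x hnorm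
    set G : EuclideanSpace ℝ (Fin (d+2)) →L[ℝ] ℝ := p • ((1 / (2 * r)) • (2 • innerSL ℝ x))
      with hGdef
    have hGval : ∀ j : Fin (d+2), G (EuclideanSpace.single j 1) = p * x j / r := by
      intro j
      simp [hGdef, real_inner_comm, EuclideanSpace.inner_single_right]
      ring
    have hcos : HasFDerivAt (fun y : EuclideanSpace ℝ (Fin (d+2)) => Real.cos (ψ ‖y‖))
        ((-Real.sin θ) • G) x := (Real.hasDerivAt_cos θ).comp_hasFDerivAt_of_eq x hg rfl
    have hsin : HasFDerivAt (fun y : EuclideanSpace ℝ (Fin (d+2)) => Real.sin (ψ ‖y‖))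
        (Real.cos θ • G) x := (Real.hasDerivAt_sin θ).comp_hasFDerivAt_of_eq x hg rfl
    have hproj : ∀ i : Fin (d+2),
        HasFDerivAt (𝕜 := ℝ) (fun y : EuclideanSpace ℝ (Fin (d+2)) => y i)
          (EuclideanSpace.proj i) x :=
      fun i => ContinuousLinearMap.hasFDerivAt (EuclideanSpace.proj (𝕜 := ℝ) i)
    set rows : Fin (d+2) → (EuclideanSpace ℝ (Fin (d+2)) →L[ℝ] ℝ) := fun i =>
      if i = 0 then
        (Real.cos θ • EuclideanSpace.proj 0 + x 0 • ((-Real.sin θ) • G)) -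
          (Real.sin θ • EuclideanSpace.proj 1 + x 1 • (Real.cos θ • G))
      else if i = 1 then
        (Real.sin θ • EuclideanSpace.proj 0 + x 0 • (Real.cos θ • G)) +
          (Real.cos θ • EuclideanSpace.proj 1 + x 1 • ((-Real.sin θ) • G))
      else EuclideanSpace.proj i with hrows
    have hrow0 : HasFDerivAt
        (fun y : EuclideanSpace ℝ (Fin (d+2)) => Real.cos (ψ ‖y‖) * y 0 - Real.sin (ψ ‖y‖) * y 1)
        (rows 0) x := by
      exact ((hcos.mul (hproj 0)).sub (hsin.mul (hproj 1))).congr_fderiv (by simp [hrows]; rfl)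
    have hrow1 : HasFDerivAt
        (fun y : EuclideanSpace ℝ (Fin (d+2)) => Real.sin (ψ ‖y‖) * y 0 + Real.cos (ψ ‖y‖) * y 1)
        (rows 1) x := by
      exact ((hsin.mul (hproj 0)).add (hcos.mul (hproj 1))).congr_fderiv (by simp [hrows]; rfl)
    have hH : HasFDerivAt (fun y : EuclideanSpace ℝ (Fin (d+2)) => (fun i : Fin (d+2) =>
        if i = 0 then Real.cos (ψ ‖y‖) * y 0 - Real.sin (ψ ‖y‖) * y 1
        else if i = 1 then Real.sin (ψ ‖y‖) * y 0 + Real.cos (ψ ‖y‖) * y 1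
        else y i)) (ContinuousLinearMap.pi rows) x := by
      apply hasFDerivAt_pi.2
      intro i
      by_cases h0 : i = 0
      · subst h0; simpa using hrow0
      by_cases h1 : i = 1
      · subst h1; simpa [h0] using hrow1
      · simp only [hrows, h0, h1, if_false]
        exact hproj i
    have hD : HasFDerivAt h
        ((((PiLp.continuousLinearEquiv 2 ℝ fun _ : Fin (d+2) => ℝ).symm :
            (Fin (d+2) → ℝ) →L[ℝ] EuclideanSpace ℝ (Fin (d+2)))).comp
          (ContinuousLinearMap.pi rows)) x := by
      have := (((PiLp.continuousLinearEquiv 2 ℝ fun _ : Fin (d+2) => ℝ).symm :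
            (Fin (d+2) → ℝ) →L[ℝ] EuclideanSpace ℝ (Fin (d+2)))).hasFDerivAt.comp x hH
      apply this.congr_of_eventuallyEq
      filter_upwards with y
      rw [hh]
      rfl
    have habs : ∀ c : ℝ, c ^ 2 ≤ r ^ 2 → |c| ≤ r := by
      intro c hc
      have h2 := Real.sqrt_le_sqrt hc
      rwa [Real.sqrt_sq_eq_abs, Real.sqrt_sq hr.le] at h2
    have hnormsq : r ^ 2 = ∑ i, x i ^ 2 := by
      rw [hrdef, EuclideanSpace.norm_eq, Real.sq_sqrt (by positivity)]
      simp [sq_abs]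
    have hxj : ∀ j : Fin (d+2), |x j| ≤ r := by
      intro j
      refine habs _ ?_
      rw [hnormsq]
      exact Finset.single_le_sum (f := fun i => x i ^ 2) (fun i _ => sq_nonneg _)
        (Finset.mem_univ j)
    have hsum : x 0 ^ 2 + x 1 ^ 2 ≤ r ^ 2 := by
      rw [hnormsq]
      calc x 0 ^ 2 + x 1 ^ 2 = ∑ i ∈ ({0, 1} : Finset (Fin (d+2))), x i ^ 2 := by
            rw [Finset.sum_pair (by simp [Fin.ext_iff] : (0 : Fin (d+2)) ≠ 1)]
        _ ≤ _ := Finset.sum_le_sum_of_subset_of_nonneg (Finset.subset_univ _)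
            (fun i _ _ => sq_nonneg _)
    have hC : r * |p| < ε := by
      have h3 := hder r hr.le
      rwa [abs_mul, abs_of_pos hr] at h3
    have key : ∀ (c : ℝ) (j : Fin (d+2)), |c| ≤ r → |c * (p * x j / r)| < ε := by
      intro c j hc
      have h1 : |c * (p * x j / r)| = |c| * |p| * |x j| / r := by
        rw [abs_mul, abs_div, abs_mul, abs_of_pos hr]; ring
      rw [h1, div_lt_iff₀ hr]
      nlinarith [abs_nonneg p, abs_nonneg c, abs_nonneg (x j), hxj j, hC,
        mul_le_mul hc (hxj j) (abs_nonneg _) hr.le,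
        mul_le_mul_of_nonneg_left (mul_le_mul hc (hxj j) (abs_nonneg _) hr.le) (abs_nonneg p),
        mul_lt_mul_of_pos_right hC hr]
    intro i j
    rw [hD.fderiv]
    have hentryL : (((PiLp.continuousLinearEquiv 2 ℝ fun _ : Fin (d+2) => ℝ).symm :
        (Fin (d+2) → ℝ) →L[ℝ] EuclideanSpace ℝ (Fin (d+2)))).comp
          (ContinuousLinearMap.pi rows) (EuclideanSpace.single j 1) i
        = rows i (EuclideanSpace.single j 1) := rfl
    rw [hentryL]
    by_cases h0 : i = 0
    · subst h0
      have hE : rows 0 (EuclideanSpace.single j 1) - Rot d θ (EuclideanSpace.single j 1) 0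
          = (-(Real.sin θ * x 0) - Real.cos θ * x 1) * (p * x j / r) := by
        simp [hrows, Rot, hGval j]
        ring
      rw [hE]
      refine key _ j (habs _ ?_)
      nlinarith [sin_sq_add_cos_sq θ, sq_nonneg (Real.sin θ * x 1 - Real.cos θ * x 0), hsum]
    by_cases h1 : i = 1
    · subst h1
      have hE : rows 1 (EuclideanSpace.single j 1) - Rot d θ (EuclideanSpace.single j 1) 1
          = (Real.cos θ * x 0 - Real.sin θ * x 1) * (p * x j / r) := by
        simp [hrows, Rot, hGval j]
        ring
      rw [hE]
      refine key _ j (habs _ ?_)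
      nlinarith [sin_sq_add_cos_sq θ, sq_nonneg (Real.cos θ * x 1 + Real.sin θ * x 0), hsum]
    · have hE : rows i (EuclideanSpace.single j 1) - Rot d θ (EuclideanSpace.single j 1) i = 0 := by
        simp [hrows, Rot, h0, h1]
      rw [hE]
      simpa using hε
end
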